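/- (Maurey-type matrix covering bound.) Let (p, q) and (r, s) be pairs of conjugate exponents (1/p + 1/q = 1 and 1/r + 1/s = 1) with p ≤ 2, let a, b, ε > 0 be reals and m a positive integer. Let X ∈ ℝ^{n×d} satisfy ‖X‖_p ≤ b, where ‖X‖_p is the entrywise ℓ_p norm. Consider the family H_A = { X·A : A ∈ ℝ^{d×m}, ‖A‖_{q,s} ≤ a }, where ‖A‖_{q,s} is the (q,s) group norm. Then there exists a finite set T ⊆ ℝ^{n×m} with log |T| ≤ ⌈a²·b²·m^{2/r} / ε²⌉ · log(2·d·m) such that every element of H_A is within Frobenius distance ε of some element of T; that is, the ε-covering number of H_A in the norm ‖·‖_F satisfies log N(H_A, ε, ‖·‖_F) ≤ ⌈a²b²m^{2/r}/ε²⌉ · log(2dm). -/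

import Mathlib

/-- The Frobenius norm of a real matrix. -/
noncomputable def frobNorm {m n : ℕ} (M : Matrix (Fin m) (Fin n) ℝ) : ℝ :=
  Real.sqrt (∑ i, ∑ j, (M i j) ^ 2)

/-- The entrywise `ℓ_p` norm of a real matrix: `(Σ_{i,j} |X_{ij}|^p)^{1/p}`. -/
noncomputable def entryLpNorm (p : ℝ) {m n : ℕ} (X : Matrix (Fin m) (Fin n) ℝ) : ℝ :=
  (∑ i, ∑ j, |X i j| ^ p) ^ (1 / p)

/-- The `(q,s)` group norm of a real matrix: the `ℓ_s` norm of the vector of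
`ℓ_q` norms of its columns. -/
noncomputable def groupNorm (q s : ℝ) {d m : ℕ} (A : Matrix (Fin d) (Fin m) ℝ) : ℝ :=
  (∑ j, ((∑ i, |A i j| ^ q) ^ (1 / q)) ^ s) ^ (1 / s)

/-! Maurey's empirical method. Writing `X * A = ∑ i j, A i j • (X * single i j 1)`, where
`X * single i j 1` carries the `i`-th column of `X` into column `j`, Hölder's inequality twice and
`‖·‖₂ ≤ ‖·‖_p` for `p ≤ 2` give `∑ i j, |A i j| * ‖X_{:,i}‖₂ ≤ C := a b m^{1/r}`. Hence `X * A` is a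
convex combination of the `2dm` matrices `±C • X * single i j 1 / ‖X_{:,i}‖₂`, each of Frobenius
norm at most `C`. Drawing `k` of them independently according to the weights, the empirical mean
has mean square error at most `C² / k`; choosing the draws greedily one at a time realizes this
bound, so for `k = ⌈C²/ε²⌉` one of the at most `(2dm)^k` empirical means is `ε`-close to `X * A`. -/

open Finset

theorem rpow_sum_le_sum_rpow {ι : Type*} (s : Finset ι) {f : ι → ℝ} (hf : ∀ i ∈ s, 0 ≤ f i)
    {θ : ℝ} (hθ0 : 0 < θ) (hθ1 : θ ≤ 1) :
    (∑ i ∈ s, f i) ^ θ ≤ ∑ i ∈ s, f i ^ θ := by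
  classical
  induction s using Finset.induction_on with
  | empty => simp [Real.zero_rpow hθ0.ne']
  | insert a s ha ih =>
    rw [sum_insert ha, sum_insert ha]
    have hs : ∀ i ∈ s, 0 ≤ f i := fun i hi => hf i (mem_insert_of_mem hi)
    calc (f a + ∑ i ∈ s, f i) ^ θ ≤ f a ^ θ + (∑ i ∈ s, f i) ^ θ :=
          Real.rpow_add_le_add_rpow (hf a (mem_insert_self a s)) (sum_nonneg hs) hθ0.le hθ1
      _ ≤ f a ^ θ + ∑ i ∈ s, f i ^ θ := by gcongr; exact ih hs

theorem sqrt_sum_sq_le_rpow_sum_abs_rpow {ι : Type*} [Fintype ι] (f : ι → ℝ) {p : ℝ}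
    (hp0 : 0 < p) (hp2 : p ≤ 2) :
    √(∑ i, f i ^ 2) ≤ (∑ i, |f i| ^ p) ^ (1 / p) := by
  have hsq : ∀ i, (f i ^ 2) ^ (p / 2) = |f i| ^ p := fun i => by
    rw [← sq_abs, ← Real.rpow_natCast, ← Real.rpow_mul (abs_nonneg _), Nat.cast_ofNat,
      mul_div_cancel₀ _ two_ne_zero]
  calc √(∑ i, f i ^ 2) = ((∑ i, f i ^ 2) ^ (p / 2)) ^ (1 / p) := by
        rw [Real.sqrt_eq_rpow, ← Real.rpow_mul (by positivity)]
        congr 1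
        field_simp
    _ ≤ (∑ i, |f i| ^ p) ^ (1 / p) := by
        gcongr
        simpa only [hsq] using rpow_sum_le_sum_rpow (θ := p / 2) univ
          (fun i _ => sq_nonneg (f i)) (by positivity) (by linarith)

theorem sum_sum_abs_mul_sqrt_sum_sq_le {n d m : ℕ} {p q r s : ℝ} (hpq : p.HolderConjugate q)
    (hrs : r.HolderConjugate s) (hp2 : p ≤ 2)
    (X : Matrix (Fin n) (Fin d) ℝ) (A : Matrix (Fin d) (Fin m) ℝ) :
    ∑ i, ∑ j, |A i j| * √(∑ k, X k i ^ 2) ≤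
      groupNorm q s A * entryLpNorm p X * (m : ℝ) ^ (1 / r) := by
  set colNormX : Fin d → ℝ := fun i => (∑ k, |X k i| ^ p) ^ (1 / p)
  set colNormA : Fin m → ℝ := fun j => (∑ i, |A i j| ^ q) ^ (1 / q)
  have hX : (∑ i, colNormX i ^ p) ^ (1 / p) = entryLpNorm p X := by
    rw [entryLpNorm, sum_comm]
    congr 1
    refine sum_congr rfl fun i _ => ?_
    rw [← Real.rpow_mul (by positivity), one_div_mul_cancel hpq.ne_zero, Real.rpow_one]
  have hcol : ∀ j, ∑ i, |A i j| * √(∑ k, X k i ^ 2) ≤ colNormA j * entryLpNorm p X := fun j =>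
    calc ∑ i, |A i j| * √(∑ k, X k i ^ 2) ≤ ∑ i, |A i j| * colNormX i := by
          gcongr with i
          exact sqrt_sum_sq_le_rpow_sum_abs_rpow (fun k => X k i) hpq.pos hp2
      _ ≤ colNormA j * (∑ i, colNormX i ^ p) ^ (1 / p) :=
          Real.inner_le_Lp_mul_Lq_of_nonneg univ hpq.symm (fun _ _ => abs_nonneg _)
            (fun _ _ => by positivity)
      _ = colNormA j * entryLpNorm p X := by rw [hX]
  have hrow : ∑ j, colNormA j ≤ (m : ℝ) ^ (1 / r) * groupNorm q s A := by
    simpa [groupNorm, colNormA] using Real.inner_le_Lp_mul_Lq_of_nonneg univ hrs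
      (f := fun _ => 1) (g := colNormA) (by simp) (fun _ _ => by positivity)
  calc ∑ i, ∑ j, |A i j| * √(∑ k, X k i ^ 2)
      = ∑ j, ∑ i, |A i j| * √(∑ k, X k i ^ 2) := sum_comm
    _ ≤ ∑ j, colNormA j * entryLpNorm p X := sum_le_sum fun j _ => hcol j
    _ = (∑ j, colNormA j) * entryLpNorm p X := (sum_mul ..).symm
    _ ≤ (m : ℝ) ^ (1 / r) * groupNorm q s A * entryLpNorm p X := by
        gcongr
        unfold entryLpNorm
        positivity
    _ = groupNorm q s A * entryLpNorm p X * (m : ℝ) ^ (1 / r) := by ring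

section Maurey

variable {E : Type*} [NormedAddCommGroup E] [InnerProductSpace ℝ E] {ι : Type*} [Fintype ι]
  {P : ι → ℝ} {V : ι → E} {C : ℝ}

theorem exists_le_sum_mul_of_sum_eq_one (hP0 : ∀ i, 0 ≤ P i) (hP1 : ∑ i, P i = 1) (g : ι → ℝ) :
    ∃ i, g i ≤ ∑ j, P j * g j := by
  have : Nonempty ι := by
    by_contra h
    rw [not_nonempty_iff] at h
    simp at hP1
  obtain ⟨i, hi⟩ := Finite.exists_min g
  refine ⟨i, ?_⟩
  calc g i = ∑ j, P j * g i := by rw [← sum_mul, hP1, one_mul]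
    _ ≤ ∑ j, P j * g j := by gcongr with j; exacts [hP0 j, hi j]

theorem sum_mul_norm_sub_add_sq_le (hP0 : ∀ i, 0 ≤ P i) (hP1 : ∑ i, P i = 1)
    (hV : ∀ i, ‖V i‖ ≤ C) (u : E) :
    ∑ i, P i * ‖u - ∑ j, P j • V j + V i‖ ^ 2 ≤ ‖u‖ ^ 2 + C ^ 2 := by
  set M := ∑ j, P j • V j
  have hexpand : ∑ i, P i * ‖u - M + V i‖ ^ 2 =
      ‖u - M‖ ^ 2 + 2 * inner ℝ (u - M) M + ∑ i, P i * ‖V i‖ ^ 2 := by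
    simp only [norm_add_sq_real, mul_add, sum_add_distrib, ← sum_mul, hP1, one_mul]
    simp [M, inner_sum, real_inner_smul_right, mul_sum, mul_left_comm]
  have hcenter : ‖u - M‖ ^ 2 + 2 * inner ℝ (u - M) M = ‖u‖ ^ 2 - ‖M‖ ^ 2 := by
    rw [norm_sub_sq_real, inner_sub_left, real_inner_self_eq_norm_sq]
    ring
  have hsecond : ∑ i, P i * ‖V i‖ ^ 2 ≤ C ^ 2 :=
    calc ∑ i, P i * ‖V i‖ ^ 2 ≤ ∑ i, P i * C ^ 2 := by
          gcongr with i
          exacts [hP0 i, hV i]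
      _ = C ^ 2 := by rw [← sum_mul, hP1, one_mul]
  rw [hexpand, hcenter]
  linarith [sq_nonneg ‖M‖]

theorem exists_norm_sum_sub_smul_sq_le (hP0 : ∀ i, 0 ≤ P i) (hP1 : ∑ i, P i = 1)
    (hV : ∀ i, ‖V i‖ ≤ C) (k : ℕ) :
    ∃ f : Fin k → ι, ‖∑ t, V (f t) - (k : ℝ) • ∑ i, P i • V i‖ ^ 2 ≤ k * C ^ 2 := by
  induction k with
  | zero => exact ⟨Fin.elim0, by simp⟩
  | succ k ih =>
    obtain ⟨f, hf⟩ := ih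
    set M := ∑ i, P i • V i
    set u := ∑ t, V (f t) - (k : ℝ) • M
    obtain ⟨i, hi⟩ := exists_le_sum_mul_of_sum_eq_one hP0 hP1 fun i => ‖u - M + V i‖ ^ 2
    refine ⟨Fin.cons i f, ?_⟩
    have hstep : ∑ t, V (Fin.cons (α := fun _ => ι) i f t) - ((k + 1 : ℕ) : ℝ) • M =
        u - M + V i := by
      simp only [Fin.sum_univ_succ, Fin.cons_zero, Fin.cons_succ, u]
      push_cast
      rw [add_smul, one_smul]
      abel
    calc ‖∑ t, V (Fin.cons (α := fun _ => ι) i f t) - ((k + 1 : ℕ) : ℝ) • M‖ ^ 2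
        = ‖u - M + V i‖ ^ 2 := by rw [hstep]
      _ ≤ ‖u‖ ^ 2 + C ^ 2 := hi.trans (sum_mul_norm_sub_add_sq_le hP0 hP1 hV u)
      _ ≤ k * C ^ 2 + C ^ 2 := by gcongr
      _ = ((k + 1 : ℕ) : ℝ) * C ^ 2 := by push_cast; ring

open Classical in
noncomputable def empiricalMeans (k : ℕ) (V : ι → E) : Finset E :=
  univ.image fun f : Fin k → ι => (k : ℝ)⁻¹ • ∑ t, V (f t)

theorem card_empiricalMeans_le (k : ℕ) (V : ι → E) :
    #(empiricalMeans k V) ≤ Fintype.card ι ^ k := by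
  classical
  exact card_image_le.trans (by simp)

theorem exists_mem_empiricalMeans_norm_sub_le (hP0 : ∀ i, 0 ≤ P i) (hP1 : ∑ i, P i = 1)
    (hV : ∀ i, ‖V i‖ ≤ C) (hC : 0 < C) {ε : ℝ} (hε : 0 < ε) {k : ℕ} (hk : C ^ 2 / ε ^ 2 ≤ k) :
    ∃ Y ∈ empiricalMeans k V, ‖∑ i, P i • V i - Y‖ ≤ ε := by
  obtain ⟨f, hf⟩ := exists_norm_sum_sub_smul_sq_le hP0 hP1 hV k
  have hk0 : (0 : ℝ) < k := lt_of_lt_of_le (by positivity) hk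
  refine ⟨(k : ℝ)⁻¹ • ∑ t, V (f t), by classical exact mem_image_of_mem _ (mem_univ f), ?_⟩
  set w := ∑ t, V (f t) - (k : ℝ) • ∑ i, P i • V i
  have hw : ∑ i, P i • V i - (k : ℝ)⁻¹ • ∑ t, V (f t) = -((k : ℝ)⁻¹ • w) := by
    rw [smul_sub, smul_smul, inv_mul_cancel₀ hk0.ne', one_smul, neg_sub]
  rw [hw, norm_neg, norm_smul, norm_inv, Real.norm_natCast, inv_mul_le_iff₀ hk0]
  refine (pow_le_pow_iff_left₀ (norm_nonneg w) (by positivity) two_ne_zero).mp ?_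
  calc ‖w‖ ^ 2 ≤ k * C ^ 2 := hf
    _ ≤ k * (k * ε ^ 2) := by gcongr; exact (div_le_iff₀ (by positivity)).mp hk
    _ = (k * ε) ^ 2 := by ring

end Maurey

section SignedAtoms

variable {E : Type*} [NormedAddCommGroup E] [InnerProductSpace ℝ E] {κ : Type*}

noncomputable def signedAtoms (C : ℝ) (v : κ → E) : κ ⊕ κ → E :=
  Sum.elim (fun j => (C / ‖v j‖) • v j) (fun j => -((C / ‖v j‖) • v j))

theorem norm_signedAtoms_le {C : ℝ} (hC : 0 ≤ C) (v : κ → E) (z : κ ⊕ κ) :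
    ‖signedAtoms C v z‖ ≤ C := by
  have h : ∀ j, ‖(C / ‖v j‖) • v j‖ ≤ C := fun j => by
    rcases eq_or_ne (v j) 0 with hv | hv
    · simpa [hv] using hC
    · rw [norm_smul, Real.norm_eq_abs, abs_div, abs_norm, abs_of_nonneg hC,
        div_mul_cancel₀ _ (norm_ne_zero_iff.2 hv)]
  cases z <;> simp [signedAtoms, h]

theorem exists_mem_empiricalMeans_signedAtoms_norm_sub_le [Fintype κ] [Nonempty κ] (c : κ → ℝ)
    (v : κ → E) {C ε : ℝ} (hcv : ∑ j, |c j| * ‖v j‖ ≤ C) (hC : 0 < C) (hε : 0 < ε) {k : ℕ}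
    (hk : C ^ 2 / ε ^ 2 ≤ k) :
    ∃ Y ∈ empiricalMeans k (signedAtoms C v), ‖∑ j, c j • v j - Y‖ ≤ ε := by
  set y : κ → ℝ := fun j => c j * ‖v j‖ / C
  have hy : ∑ j, |y j| ≤ 1 := by
    simp only [y, abs_div, abs_mul, abs_norm, abs_of_pos hC, ← sum_div]
    exact (div_le_one hC).2 hcv
  -- the slack `1 - ∑ |y j|` is spread evenly over the pairs `±`, where it cancels
  set w : ℝ := (1 - ∑ j, |y j|) / (2 * Fintype.card κ)
  have hw : 0 ≤ w := div_nonneg (sub_nonneg.2 hy) (by positivity)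
  set P : κ ⊕ κ → ℝ := Sum.elim (fun j => (y j)⁺ + w) (fun j => (y j)⁻ + w)
  have hP0 : ∀ z, 0 ≤ P z := by
    rintro (j | j) <;> simp only [P, Sum.elim_inl, Sum.elim_inr] <;> positivity
  have hP1 : ∑ z, P z = 1 := by
    simp only [P, Fintype.sum_sum_type, Sum.elim_inl, Sum.elim_inr, ← sum_add_distrib]
    have : ∀ j, (y j)⁺ + w + ((y j)⁻ + w) = |y j| + 2 * w := fun j => by
      rw [← posPart_add_negPart]
      ring
    have hslack : (Fintype.card κ : ℝ) * (2 * w) = 1 - ∑ j, |y j| := by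
      have : (0 : ℝ) < Fintype.card κ := by exact_mod_cast Fintype.card_pos
      simp only [w]
      field_simp
    rw [sum_congr rfl fun j _ => this j, sum_add_distrib, sum_const, card_univ, nsmul_eq_mul,
      hslack]
    ring
  have hmean : ∑ z, P z • signedAtoms C v z = ∑ j, c j • v j := by
    simp only [P, signedAtoms, Fintype.sum_sum_type, Sum.elim_inl, Sum.elim_inr, ←
      sum_add_distrib]
    refine sum_congr rfl fun j _ => ?_
    rw [smul_neg, ← sub_eq_add_neg, ← sub_smul, add_sub_add_right_eq_sub, posPart_sub_negPart,
      smul_smul]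
    rcases eq_or_ne (v j) 0 with hv | hv
    · simp [hv]
    · congr 1
      simp only [y]
      field_simp [norm_ne_zero_iff.2 hv]
  simpa only [hmean] using
    exists_mem_empiricalMeans_norm_sub_le hP0 hP1 (norm_signedAtoms_le hC.le v) hC hε hk

end SignedAtoms

theorem Real.log_natCast_le_mul_log_of_le_pow {N B k : ℕ} (h : N ≤ B ^ k) :
    Real.log N ≤ k * Real.log B := by
  rcases N.eq_zero_or_pos with rfl | hN
  · simpa using mul_nonneg k.cast_nonneg (Real.log_natCast_nonneg B)
  · calc Real.log N ≤ Real.log ((B ^ k : ℕ) : ℝ) :=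
          Real.log_le_log (by exact_mod_cast hN) (by exact_mod_cast h)
      _ = k * Real.log B := by push_cast; exact Real.log_pow _ _

noncomputable def Matrix.flattenL2 (ι κ : Type*) : Matrix ι κ ℝ ≃ₗ[ℝ] EuclideanSpace ℝ (ι × κ) :=
  (LinearEquiv.curry ℝ ℝ ι κ).symm.trans (WithLp.linearEquiv 2 ℝ (ι × κ → ℝ)).symm

theorem Matrix.flattenL2_apply {ι κ : Type*} (M : Matrix ι κ ℝ) (i : ι) (j : κ) :
    Matrix.flattenL2 ι κ M (i, j) = M i j :=
  rfl

theorem frobNorm_eq_norm_flattenL2 {n m : ℕ} (M : Matrix (Fin n) (Fin m) ℝ) :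
    frobNorm M = ‖Matrix.flattenL2 _ _ M‖ := by
  simp [frobNorm, EuclideanSpace.norm_eq, Fintype.sum_prod_type, Matrix.flattenL2_apply]

theorem frobNorm_mul_single_one {n d m : ℕ} (X : Matrix (Fin n) (Fin d) ℝ) (i : Fin d)
    (j : Fin m) : frobNorm (X * Matrix.single i j (1 : ℝ)) = √(∑ k, X k i ^ 2) := by
  unfold frobNorm
  congr 1
  refine sum_congr rfl fun k _ => ?_
  rw [sum_eq_single j (fun l _ hl => by simp [Matrix.mul_single_apply_of_ne (hbj := hl)]) (by simp),
    Matrix.mul_single_apply_same, mul_one]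

theorem Matrix.mul_eq_sum_smul_mul_single_one {l d m R : Type*} [Fintype d] [Fintype m]
    [DecidableEq d] [DecidableEq m] [CommSemiring R] (X : Matrix l d R) (A : Matrix d m R) :
    X * A = ∑ i, ∑ j, A i j • (X * single i j (1 : R)) := by
  conv_lhs => rw [matrix_eq_sum_single A]
  simp only [Matrix.mul_sum, ← Matrix.mul_smul, smul_single, smul_eq_mul, mul_one]

noncomputable def columnAtoms {n d : ℕ} (m : ℕ) (X : Matrix (Fin n) (Fin d) ℝ) :
    Fin d × Fin m → EuclideanSpace ℝ (Fin n × Fin m) :=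
  fun ij => Matrix.flattenL2 _ _ (X * Matrix.single ij.1 ij.2 (1 : ℝ))

theorem norm_columnAtoms {n d m : ℕ} (X : Matrix (Fin n) (Fin d) ℝ) (ij : Fin d × Fin m) :
    ‖columnAtoms m X ij‖ = √(∑ k, X k ij.1 ^ 2) := by
  rw [columnAtoms, ← frobNorm_eq_norm_flattenL2, frobNorm_mul_single_one]

theorem sum_smul_columnAtoms {n d m : ℕ} (X : Matrix (Fin n) (Fin d) ℝ)
    (A : Matrix (Fin d) (Fin m) ℝ) :
    ∑ ij, A ij.1 ij.2 • columnAtoms m X ij = Matrix.flattenL2 _ _ (X * A) := by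
  simp only [Matrix.mul_eq_sum_smul_mul_single_one X A, map_sum, map_smul, columnAtoms,
    Fintype.sum_prod_type]

open Classical in
noncomputable def maureyCover {n d : ℕ} (m : ℕ) (X : Matrix (Fin n) (Fin d) ℝ) (C : ℝ) (k : ℕ) :
    Finset (Matrix (Fin n) (Fin m) ℝ) :=
  (empiricalMeans k (signedAtoms C (columnAtoms m X))).image (Matrix.flattenL2 _ _).symm

theorem card_maureyCover_le {n d : ℕ} (m : ℕ) (X : Matrix (Fin n) (Fin d) ℝ) (C : ℝ) (k : ℕ) :
    #(maureyCover m X C k) ≤ (2 * d * m) ^ k := by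
  classical
  exact card_image_le.trans ((card_empiricalMeans_le k _).trans_eq (by simp; ring))

theorem exists_mem_maureyCover_frobNorm_sub_le {n d m : ℕ} (hd : 0 < d) (hm : 0 < m)
    (X : Matrix (Fin n) (Fin d) ℝ) (A : Matrix (Fin d) (Fin m) ℝ) {C ε : ℝ}
    (hA : ∑ i, ∑ j, |A i j| * √(∑ k, X k i ^ 2) ≤ C) (hC : 0 < C) (hε : 0 < ε) {k : ℕ}
    (hk : C ^ 2 / ε ^ 2 ≤ k) :
    ∃ Y ∈ maureyCover m X C k, frobNorm (X * A - Y) ≤ ε := by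
  classical
  have : Nonempty (Fin d × Fin m) := ⟨(⟨0, hd⟩, ⟨0, hm⟩)⟩
  obtain ⟨Y, hY, hXY⟩ := exists_mem_empiricalMeans_signedAtoms_norm_sub_le
    (fun ij => A ij.1 ij.2) (columnAtoms m X)
    (by simpa only [norm_columnAtoms, Fintype.sum_prod_type] using hA) hC hε hk
  refine ⟨(Matrix.flattenL2 _ _).symm Y, mem_image_of_mem _ hY, ?_⟩
  rwa [frobNorm_eq_norm_flattenL2, map_sub, LinearEquiv.apply_symm_apply,
    ← sum_smul_columnAtoms]

theorem maurey_matrix_covering_bound_general {n d m : ℕ} (hd : 0 < d) (hm : 0 < m)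
    (p q r s : ℝ) (hp : 1 < p) (hr : 1 < r)
    (hpq : 1 / p + 1 / q = 1) (hrs : 1 / r + 1 / s = 1) (hp2 : p ≤ 2)
    (a b ε : ℝ) (ha : 0 < a) (hb : 0 < b) (hε : 0 < ε)
    (X : Matrix (Fin n) (Fin d) ℝ) (hX : entryLpNorm p X ≤ b) :
    ∃ T : Finset (Matrix (Fin n) (Fin m) ℝ),
      Real.log T.card ≤
        (⌈a ^ 2 * b ^ 2 * (m : ℝ) ^ (2 / r) / ε ^ 2⌉ : ℝ) * Real.log (2 * d * m) ∧
      ∀ A : Matrix (Fin d) (Fin m) ℝ, groupNorm q s A ≤ a →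
        ∃ Y ∈ T, frobNorm (X * A - Y) ≤ ε := by
  set C := a * b * (m : ℝ) ^ (1 / r)
  have hC : 0 < C := by positivity
  refine ⟨maureyCover m X C ⌈C ^ 2 / ε ^ 2⌉₊, ?_, fun A hA => ?_⟩
  · have hC2 : C ^ 2 = a ^ 2 * b ^ 2 * (m : ℝ) ^ (2 / r) := by
      rw [mul_pow, mul_pow, ← Real.rpow_mul_natCast (by positivity), Nat.cast_ofNat,
        one_div_mul_eq_div]
    rw [← hC2, ← natCast_ceil_eq_intCast_ceil (by positivity)]
    exact_mod_cast Real.log_natCast_le_mul_log_of_le_pow (card_maureyCover_le m X C _)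
  · have hpq' : p.HolderConjugate q := Real.holderConjugate_iff.2 ⟨hp, by simpa using hpq⟩
    have hrs' : r.HolderConjugate s := Real.holderConjugate_iff.2 ⟨hr, by simpa using hrs⟩
    refine exists_mem_maureyCover_frobNorm_sub_le hd hm X A ?_ hC hε (Nat.le_ceil _)
    calc ∑ i, ∑ j, |A i j| * √(∑ k, X k i ^ 2)
        ≤ groupNorm q s A * entryLpNorm p X * (m : ℝ) ^ (1 / r) :=
          sum_sum_abs_mul_sqrt_sum_sq_le hpq' hrs' hp2 X A
      _ ≤ a * b * (m : ℝ) ^ (1 / r) := by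
          gcongr
          unfold entryLpNorm
          positivity

/-- (Maurey-type matrix covering bound.) Let `(p,q)` and `(r,s)` be
conjugate exponents with `p ≤ 2`, `a, b, ε > 0`, and `X` a real `n × d` matrix with
entrywise `ℓ_p` norm at most `b`. Then the class `{X·A : ‖A‖_{q,s} ≤ a}` admits an
`ε`-cover `T` (in Frobenius distance) with
`log |T| ≤ ⌈a²b²m^{2/r}/ε²⌉·log(2dm)`. -/
theorem maurey_matrix_covering_bound {n d m : ℕ} (hn : 0 < n) (hd : 0 < d) (hm : 0 < m)
    (p q r s : ℝ) (hp : 1 < p) (hq : 1 < q) (hr : 1 < r) (hs : 1 < s)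
    (hpq : 1 / p + 1 / q = 1) (hrs : 1 / r + 1 / s = 1) (hp2 : p ≤ 2)
    (a b ε : ℝ) (ha : 0 < a) (hb : 0 < b) (hε : 0 < ε)
    (X : Matrix (Fin n) (Fin d) ℝ) (hX : entryLpNorm p X ≤ b) :
    ∃ T : Finset (Matrix (Fin n) (Fin m) ℝ),
      Real.log T.card ≤
        (⌈a ^ 2 * b ^ 2 * (m : ℝ) ^ (2 / r) / ε ^ 2⌉ : ℝ) * Real.log (2 * d * m) ∧
      ∀ A : Matrix (Fin d) (Fin m) ℝ, groupNorm q s A ≤ a →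
        ∃ Y ∈ T, frobNorm (X * A - Y) ≤ ε :=
  maurey_matrix_covering_bound_general hd hm p q r s hp hr hpq hrs hp2 a b ε ha hb hε X hX
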